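/- arXiv:1601.04614 — 4 statements merged into one kernel-verified Lean document; each statement's English description precedes it below -/
import Mathlib

section
/- Radon's inversion formula on the Euclidean plane: Let f : ℝ² → ℝ be smooth with compact support. For x ∈ ℝ² and t > 0 set F_x(t) = (1/(2π)) ∫₀^{2π} Xf(x + t θ(φ)^⊥, θ(φ)) dφ, where θ(φ) = (cos φ, sin φ) and (a,b)^⊥ = (b, −a). Then F_x is differentiable on (0,∞), the improper integral ∫₀^∞ F_x'(t)/t dt converges, and f(x) = −(1/π) ∫₀^∞ F_x'(t)/t dt. -/
open MeasureTheory Real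

/-- The X-ray transform of `f : ℝ² → ℝ` along the line through `x` with direction `θ`. -/
noncomputable def xrayTransform (f : EuclideanSpace ℝ (Fin 2) → ℝ)
    (x θ : EuclideanSpace ℝ (Fin 2)) : ℝ :=
  ∫ s : ℝ, f (x + s • θ)

/-- The unit vector `θ(φ) = (cos φ, sin φ)`. -/
noncomputable def thetaVec (φ : ℝ) : EuclideanSpace ℝ (Fin 2) :=
  (WithLp.equiv 2 (Fin 2 → ℝ)).symm ![Real.cos φ, Real.sin φ]

/-- The rotation `(a, b)^⊥ = (b, -a)`. -/
noncomputable def perpVec (v : EuclideanSpace ℝ (Fin 2)) : EuclideanSpace ℝ (Fin 2) :=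
  (WithLp.equiv 2 (Fin 2 → ℝ)).symm ![v 1, -(v 0)]

/-- The mean value `F_x(t)` of the X-ray transform of `f` over all lines at distance `t`
from `x`. -/
noncomputable def meanValue (f : EuclideanSpace ℝ (Fin 2) → ℝ)
    (x : EuclideanSpace ℝ (Fin 2)) (t : ℝ) : ℝ :=
  (1 / (2 * π)) * ∫ φ in (0:ℝ)..(2 * π),
    xrayTransform f (x + t • perpVec (thetaVec φ)) (thetaVec φ)

lemma thetaVec_zero (φ : ℝ) : thetaVec φ 0 = Real.cos φ := rfl
lemma thetaVec_one (φ : ℝ) : thetaVec φ 1 = Real.sin φ := rfl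

lemma norm_thetaVec (φ : ℝ) : ‖thetaVec φ‖ = 1 := by
  rw [EuclideanSpace.norm_eq]
  simp [Fin.sum_univ_two, thetaVec]

@[fun_prop]
lemma continuous_thetaVec : Continuous thetaVec := by
  have : Continuous fun φ : ℝ => (![Real.cos φ, Real.sin φ] : Fin 2 → ℝ) := by
    apply continuous_pi
    intro i
    fin_cases i <;> simp <;> fun_prop
  exact (PiLp.continuous_toLp (p := 2) (β := fun _ : Fin 2 => ℝ)).comp this

lemma periodic_thetaVec : Function.Periodic thetaVec (2 * π) := by
  intro φ
  unfold thetaVec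
  simp [Real.cos_add_two_pi, Real.sin_add_two_pi]

/-- key rotation identity -/
lemma rot_eq {ρ α s t : ℝ} (h1 : ρ * Real.cos α = s) (h2 : ρ * Real.sin α = t) (φ : ℝ) :
    t • perpVec (thetaVec φ) + s • thetaVec φ = ρ • thetaVec (φ - α) := by
  ext i
  fin_cases i <;>
    simp [thetaVec, perpVec, Real.cos_sub, Real.sin_sub, ← h1, ← h2] <;> ring

lemma norm_comb (t s φ : ℝ) :
    ‖t • perpVec (thetaVec φ) + s • thetaVec φ‖ = Real.sqrt (t ^ 2 + s ^ 2) := by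
  rw [EuclideanSpace.norm_eq]
  simp [Fin.sum_univ_two, thetaVec, perpVec]
  congr 1
  nlinarith [Real.sin_sq_add_cos_sq φ]

section Main

variable (f : EuclideanSpace ℝ (Fin 2) → ℝ) (x : EuclideanSpace ℝ (Fin 2))

noncomputable def gfun (r : ℝ) : ℝ :=
  (1 / (2 * π)) * ∫ φ in Set.Ioc (0:ℝ) (2 * π), f (x + r • thetaVec φ)

noncomputable def g1fun (r : ℝ) : ℝ :=
  (1 / (2 * π)) * ∫ φ in Set.Ioc (0:ℝ) (2 * π), (fderiv ℝ f (x + r • thetaVec φ)) (thetaVec φ)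

variable {f x}
variable (hf : ContDiff ℝ (⊤ : ℕ∞) f) (hsupp : HasCompactSupport f)

lemma finiteIoc : IsFiniteMeasure (volume.restrict (Set.Ioc (0:ℝ) (2 * π))) := by
  infer_instance

include hf in
lemma inner_hasDerivAt (φ : ℝ) (r : ℝ) :
    HasDerivAt (fun r : ℝ => f (x + r • thetaVec φ))
      ((fderiv ℝ f (x + r • thetaVec φ)) (thetaVec φ)) r := by
  have h1 : HasDerivAt (fun r : ℝ => x + r • thetaVec φ) (thetaVec φ) r := by
    simpa using ((hasDerivAt_id r).smul_const (thetaVec φ)).const_add x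
  exact ((hf.differentiable (by simp) (x + r • thetaVec φ)).hasFDerivAt).comp_hasDerivAt r h1

include hf hsupp in
lemma gfun_hasDerivAt (r : ℝ) : HasDerivAt (gfun f x) (g1fun f x r) r := by
  obtain ⟨M', hM'⟩ := (hsupp.fderiv ℝ).exists_bound_of_continuous (hf.continuous_fderiv (by simp))
  have key := hasDerivAt_integral_of_dominated_loc_of_deriv_le (μ := volume.restrict (Set.Ioc (0:ℝ) (2*π)))
      (F := fun r φ => f (x + r • thetaVec φ))
      (F' := fun r φ => (fderiv ℝ f (x + r • thetaVec φ)) (thetaVec φ))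
      (bound := fun _ => M') (x₀ := r) (s := Metric.ball r 1) (Metric.ball_mem_nhds r one_pos)
      ?_ ?_ ?_ ?_ ?_ ?_
  · exact (key.2.const_mul _ : _)
  · filter_upwards with t
    exact ((hf.continuous.comp (by fun_prop : Continuous (fun φ : ℝ => x + t • thetaVec φ)))).aestronglyMeasurable
  · apply Continuous.integrableOn_Ioc
    exact hf.continuous.comp (by fun_prop)
  · apply Continuous.aestronglyMeasurable
    apply Continuous.clm_apply _ continuous_thetaVec
    exact (hf.continuous_fderiv (by simp)).comp (by fun_prop)
  · filter_upwards with φ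
    intro t _
    calc ‖(fderiv ℝ f (x + t • thetaVec φ)) (thetaVec φ)‖
        ≤ ‖fderiv ℝ f (x + t • thetaVec φ)‖ * ‖thetaVec φ‖ := ContinuousLinearMap.le_opNorm _ _
      _ ≤ M' := by rw [norm_thetaVec]; simpa using hM' _
  · exact integrable_const _
  · filter_upwards with φ
    intro t _
    exact inner_hasDerivAt hf φ t

include hf hsupp in
lemma continuous_g1fun : Continuous (g1fun f x) := by
  obtain ⟨M', hM'⟩ := (hsupp.fderiv ℝ).exists_bound_of_continuous (hf.continuous_fderiv (by simp))
  unfold g1fun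
  refine continuous_const.mul ?_
  apply continuous_of_dominated (bound := fun _ => M')
  · intro t
    apply Continuous.aestronglyMeasurable
    apply Continuous.clm_apply _ continuous_thetaVec
    exact (hf.continuous_fderiv (by simp)).comp (by fun_prop)
  · intro t
    filter_upwards with φ
    calc ‖(fderiv ℝ f (x + t • thetaVec φ)) (thetaVec φ)‖
        ≤ ‖fderiv ℝ f (x + t • thetaVec φ)‖ * ‖thetaVec φ‖ := ContinuousLinearMap.le_opNorm _ _
      _ ≤ M' := by rw [norm_thetaVec]; simpa using hM' _
  · exact integrable_const _
  · filter_upwards with φ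
    apply Continuous.clm_apply _ continuous_const
    exact (hf.continuous_fderiv (by simp)).comp (by fun_prop)

include hsupp in
lemma exists_radius : ∃ R : ℝ, 0 < R ∧ tsupport f ⊆ Metric.ball x R := by
  obtain ⟨R, hR⟩ := hsupp.isBounded.subset_closedBall x
  exact ⟨max R 0 + 1, by positivity,
    hR.trans ((Metric.closedBall_subset_ball (by simp [lt_of_le_of_lt (le_max_left R 0)
      (lt_add_one _)])).trans (subset_refl _))⟩

lemma notin_tsupport {R r : ℝ} (hR : tsupport f ⊆ Metric.ball x R) (hr : R ≤ r) (φ : ℝ) :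
    x + r • thetaVec φ ∉ tsupport f := by
  intro h
  have := hR h
  rw [Metric.mem_ball, dist_eq_norm] at this
  simp only [add_sub_cancel_left] at this
  rw [norm_smul, norm_thetaVec, mul_one] at this
  exact absurd this (not_lt.2 (hr.trans (le_abs_self r)))

lemma gfun_eq_zero {R r : ℝ} (hR : tsupport f ⊆ Metric.ball x R) (hr : R ≤ r) :
    gfun f x r = 0 := by
  unfold gfun
  rw [setIntegral_congr_fun measurableSet_Ioc
    (fun φ _ => image_eq_zero_of_notMem_tsupport (notin_tsupport hR hr φ))]
  simp

lemma g1fun_eq_zero {R r : ℝ} (hR : tsupport f ⊆ Metric.ball x R) (hr : R ≤ r) :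
    g1fun f x r = 0 := by
  unfold g1fun
  rw [setIntegral_congr_fun measurableSet_Ioc (g := fun _ => (0:ℝ))
    (fun φ _ => ?_)]
  · simp
  · have : fderiv ℝ f (x + r • thetaVec φ) = 0 := by
      by_contra h
      exact notin_tsupport hR hr φ (support_fderiv_subset ℝ (Function.mem_support.2 h))
    simp [this]

lemma gfun_zero : gfun f x 0 = f x := by
  unfold gfun
  simp only [zero_smul, add_zero, integral_const, Measure.restrict_apply, MeasurableSet.univ,
    Set.univ_inter, Real.volume_Ioc, smul_eq_mul]
  rw [measureReal_restrict_apply MeasurableSet.univ, Set.univ_inter,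
    Real.volume_real_Ioc_of_le (by positivity), sub_zero]
  field_simp

include hf hsupp in
lemma exists_bound_g1fun : ∃ C, 0 ≤ C ∧ ∀ r, ‖g1fun f x r‖ ≤ C := by
  obtain ⟨M', hM'⟩ := (hsupp.fderiv ℝ).exists_bound_of_continuous (hf.continuous_fderiv (by simp))
  have hM'0 : 0 ≤ M' := le_trans (norm_nonneg _) (hM' x)
  refine ⟨(1 / (2 * π)) * (M' * (volume (Set.Ioc (0:ℝ) (2*π))).toReal), by positivity, fun r => ?_⟩
  unfold g1fun
  rw [norm_mul]
  gcongr
  · rw [Real.norm_eq_abs, abs_of_nonneg (by positivity)]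
  · apply norm_setIntegral_le_of_norm_le_const
    · rw [Real.volume_Ioc]; exact ENNReal.ofReal_lt_top
    · intro φ _
      calc ‖(fderiv ℝ f (x + r • thetaVec φ)) (thetaVec φ)‖
          ≤ ‖fderiv ℝ f (x + r • thetaVec φ)‖ * ‖thetaVec φ‖ := ContinuousLinearMap.le_opNorm _ _
        _ ≤ M' := by rw [norm_thetaVec]; simpa using hM' _

lemma perp_theta (φ : ℝ) : perpVec (thetaVec φ) = thetaVec (φ - π / 2) := by
  ext i
  fin_cases i <;> simp [thetaVec, perpVec, Real.cos_sub, Real.sin_sub]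

@[fun_prop]
lemma continuous_perp_theta : Continuous (fun φ => perpVec (thetaVec φ)) := by
  simp only [perp_theta]
  fun_prop

lemma sqrt_ge_abs (t s : ℝ) : |s| ≤ Real.sqrt (t ^ 2 + s ^ 2) := by
  rw [← Real.sqrt_sq_eq_abs]
  exact Real.sqrt_le_sqrt (by nlinarith)

omit hf in
lemma rotation_avg {t : ℝ} (ht : t ≠ 0) (s : ℝ) :
    ∫ φ in Set.Ioc (0:ℝ) (2 * π), f (x + (t • perpVec (thetaVec φ) + s • thetaVec φ)) =
    ∫ φ in Set.Ioc (0:ℝ) (2 * π), f (x + Real.sqrt (t ^ 2 + s ^ 2) • thetaVec φ) := by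
  set z : ℂ := ⟨s, t⟩ with hz
  have hz0 : z ≠ 0 := by
    intro h
    apply ht
    have := congrArg Complex.im h
    simpa [hz] using this
  have habs : ‖z‖ = Real.sqrt (t ^ 2 + s ^ 2) := by
    rw [Complex.norm_def, Complex.normSq_mk]
    congr 1
    ring
  have habs0 : ‖z‖ ≠ 0 := norm_ne_zero_iff.mpr hz0
  have h1 : ‖z‖ * Real.cos (Complex.arg z) = s := by
    rw [Complex.cos_arg hz0]
    show ‖z‖ * (z.re / ‖z‖) = s
    rw [mul_comm, div_mul_cancel₀ _ habs0]
  have h2 : ‖z‖ * Real.sin (Complex.arg z) = t := by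
    rw [Complex.sin_arg]
    show ‖z‖ * (z.im / ‖z‖) = t
    rw [mul_comm, div_mul_cancel₀ _ habs0]
  set α := Complex.arg z
  set ρ := ‖z‖
  have key : ∀ φ : ℝ, t • perpVec (thetaVec φ) + s • thetaVec φ = ρ • thetaVec (φ - α) :=
    fun φ => rot_eq h1 h2 φ
  simp_rw [key, ← habs]
  rw [← intervalIntegral.integral_of_le (by positivity : (0:ℝ) ≤ 2 * π),
    ← intervalIntegral.integral_of_le (by positivity : (0:ℝ) ≤ 2 * π)]
  have hper : Function.Periodic (fun ψ => f (x + ρ • thetaVec ψ)) (2 * π) :=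
    periodic_thetaVec.comp (fun v => f (x + ρ • v))
  calc (∫ φ in (0:ℝ)..(2 * π), f (x + ρ • thetaVec (φ - α)))
      = ∫ ψ in (0 - α)..(2 * π - α), f (x + ρ • thetaVec ψ) :=
        intervalIntegral.integral_comp_sub_right (fun ψ => f (x + ρ • thetaVec ψ)) α
    _ = ∫ ψ in (0:ℝ)..(2 * π), f (x + ρ • thetaVec ψ) := by
        have := hper.intervalIntegral_add_eq (0 - α) 0
        rw [show (2 * π - α) = 0 - α + 2 * π by ring]
        simpa using this

end Main

section Main2

variable {f : EuclideanSpace ℝ (Fin 2) → ℝ} {x : EuclideanSpace ℝ (Fin 2)}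
variable (hf : ContDiff ℝ (⊤ : ℕ∞) f) (hsupp : HasCompactSupport f)

include hf hsupp in
lemma integrable_prod_rot (t : ℝ) :
    Integrable (Function.uncurry fun (φ s : ℝ) =>
        f (x + (t • perpVec (thetaVec φ) + s • thetaVec φ)))
      ((volume.restrict (Set.Ioc (0:ℝ) (2 * π))).prod volume) := by
  obtain ⟨M, hM⟩ := hsupp.exists_bound_of_continuous hf.continuous
  obtain ⟨R, hR0, hR⟩ := exists_radius (x := x) hsupp
  have hM0 : 0 ≤ M := le_trans (norm_nonneg _) (hM x)
  have hcont : Continuous (Function.uncurry fun (φ s : ℝ) =>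
      f (x + (t • perpVec (thetaVec φ) + s • thetaVec φ))) := by
    apply hf.continuous.comp
    apply Continuous.add continuous_const
    apply Continuous.add
    · exact (continuous_perp_theta.comp continuous_fst).const_smul t
    · exact continuous_snd.smul (continuous_thetaVec.comp continuous_fst)
  apply Integrable.mono' (g := fun p : ℝ × ℝ =>
    Set.indicator (Set.univ ×ˢ Metric.closedBall (0:ℝ) R) (fun _ => M) p)
    (μ := (volume.restrict (Set.Ioc (0:ℝ) (2 * π))).prod volume)
  · rw [integrable_indicator_iff (MeasurableSet.univ.prod measurableSet_closedBall)]
    apply integrableOn_const (lt_top_iff_ne_top.1 ?_)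
    rw [Measure.prod_prod]
    apply ENNReal.mul_lt_top
    · rw [Measure.restrict_apply MeasurableSet.univ, Set.univ_inter, Real.volume_Ioc]
      exact ENNReal.ofReal_lt_top
    · exact measure_closedBall_lt_top
  · exact hcont.aestronglyMeasurable
  · filter_upwards with p
    by_cases hp : p ∈ Set.univ ×ˢ Metric.closedBall (0:ℝ) R
    · rw [Set.indicator_of_mem hp]
      exact hM _
    · rw [Set.indicator_of_notMem hp]
      have hs : R < |p.2| := by
        simp only [Set.mem_prod, Set.mem_univ, true_and, Metric.mem_closedBall,
          Real.dist_eq, sub_zero, not_le] at hp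
        simpa using hp
      have : f (x + (t • perpVec (thetaVec p.1) + p.2 • thetaVec p.1)) = 0 := by
        apply image_eq_zero_of_notMem_tsupport
        intro hmem
        have := hR hmem
        rw [Metric.mem_ball, dist_eq_norm, add_sub_cancel_left, norm_comb] at this
        exact absurd (lt_of_lt_of_le hs ((sqrt_ge_abs t p.2))) (not_lt.2 this.le)
      simp [Function.uncurry, this]

include hf hsupp in
lemma meanValue_eq {t : ℝ} (ht : t ≠ 0) :
    meanValue f x t = ∫ s : ℝ, gfun f x (Real.sqrt (t ^ 2 + s ^ 2)) := by
  unfold meanValue xrayTransform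
  simp_rw [add_assoc]
  rw [intervalIntegral.integral_of_le (by positivity : (0:ℝ) ≤ 2 * π)]
  rw [integral_integral_swap (integrable_prod_rot hf hsupp t)]
  rw [← integral_const_mul]
  congr 1
  funext s
  unfold gfun
  rw [rotation_avg (x := x) ht s]

include hf hsupp in
lemma continuous_gfun : Continuous (gfun f x) :=
  continuous_iff_continuousAt.2 fun r => (gfun_hasDerivAt hf hsupp r).continuousAt

include hf hsupp in
lemma F_hasDerivAt {t₀ : ℝ} (ht₀ : 0 < t₀) :
    HasDerivAt (fun t => ∫ s : ℝ, gfun f x (Real.sqrt (t ^ 2 + s ^ 2)))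
      (∫ s : ℝ, g1fun f x (Real.sqrt (t₀ ^ 2 + s ^ 2)) * (t₀ / Real.sqrt (t₀ ^ 2 + s ^ 2)))
      t₀ := by
  obtain ⟨C, hC0, hC⟩ := exists_bound_g1fun (x := x) hf hsupp
  obtain ⟨R, hR0, hR⟩ := exists_radius (x := x) hsupp
  have hgc := continuous_gfun (x := x) hf hsupp
  have hg1c := continuous_g1fun (x := x) hf hsupp
  have hsq : ∀ t : ℝ, Continuous fun s : ℝ => Real.sqrt (t ^ 2 + s ^ 2) := by fun_prop
  have key := hasDerivAt_integral_of_dominated_loc_of_deriv_le (μ := (volume : Measure ℝ))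
      (F := fun t s => gfun f x (Real.sqrt (t ^ 2 + s ^ 2)))
      (F' := fun t s => g1fun f x (Real.sqrt (t ^ 2 + s ^ 2)) * (t / Real.sqrt (t ^ 2 + s ^ 2)))
      (bound := Set.indicator (Metric.closedBall (0:ℝ) R) (fun _ => C))
      (x₀ := t₀) (s := Metric.ball t₀ (t₀ / 2)) (Metric.ball_mem_nhds t₀ (by positivity)) ?_ ?_ ?_ ?_ ?_ ?_
  · exact key.2
  · filter_upwards with t
    exact (hgc.comp (hsq t)).aestronglyMeasurable
  · apply Continuous.integrable_of_hasCompactSupport (hgc.comp (hsq t₀))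
    apply HasCompactSupport.intro (isCompact_closedBall (0:ℝ) R)
    intro s hs
    simp only [Metric.mem_closedBall, Real.dist_eq, sub_zero, not_le] at hs
    exact gfun_eq_zero hR (le_trans (le_trans hs.le (sqrt_ge_abs t₀ s)) le_rfl)
  · apply Continuous.aestronglyMeasurable
    apply (hg1c.comp (hsq t₀)).mul
    apply continuous_const.div (hsq t₀)
    intro s
    positivity
  · filter_upwards with s
    intro t htmem
    have htpos : 0 < t := by
      rw [Metric.mem_ball, Real.dist_eq] at htmem
      cases abs_lt.1 htmem with
      | intro h1 h2 => linarith
    by_cases hs : s ∈ Metric.closedBall (0:ℝ) R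
    · rw [Set.indicator_of_mem hs]
      rw [norm_mul]
      have h1 : ‖t / Real.sqrt (t ^ 2 + s ^ 2)‖ ≤ 1 := by
        rw [Real.norm_eq_abs, abs_div, abs_of_pos htpos,
          abs_of_nonneg (Real.sqrt_nonneg _)]
        rw [div_le_one (by positivity)]
        calc t = Real.sqrt (t ^ 2) := by rw [Real.sqrt_sq htpos.le]
          _ ≤ Real.sqrt (t ^ 2 + s ^ 2) := Real.sqrt_le_sqrt (by nlinarith)
      calc ‖g1fun f x (Real.sqrt (t ^ 2 + s ^ 2))‖ * ‖t / Real.sqrt (t ^ 2 + s ^ 2)‖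
          ≤ C * 1 := mul_le_mul (hC _) h1 (norm_nonneg _) hC0
        _ = C := mul_one C
    · rw [Set.indicator_of_notMem hs]
      simp only [Metric.mem_closedBall, Real.dist_eq, sub_zero, not_le] at hs
      have : g1fun f x (Real.sqrt (t ^ 2 + s ^ 2)) = 0 :=
        g1fun_eq_zero hR (le_trans hs.le (sqrt_ge_abs t s))
      simp [this]
  · rw [integrable_indicator_iff measurableSet_closedBall]
    exact integrableOn_const measure_closedBall_lt_top.ne
  · filter_upwards with s
    intro t htmem
    have htpos : 0 < t := by
      rw [Metric.mem_ball, Real.dist_eq] at htmem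
      cases abs_lt.1 htmem with
      | intro h1 h2 => linarith
    have hq : HasDerivAt (fun t : ℝ => t ^ 2 + s ^ 2) (2 * t) t := by
      simpa using (hasDerivAt_pow 2 t).add_const (s ^ 2)
    have hqpos : (0:ℝ) < t ^ 2 + s ^ 2 := by positivity
    have hsqrt : HasDerivAt Real.sqrt (1 / (2 * Real.sqrt (t ^ 2 + s ^ 2))) (t ^ 2 + s ^ 2) :=
      Real.hasDerivAt_sqrt hqpos.ne'
    have hcomp : HasDerivAt (fun t : ℝ => Real.sqrt (t ^ 2 + s ^ 2))
        (1 / (2 * Real.sqrt (t ^ 2 + s ^ 2)) * (2 * t)) t := hsqrt.comp t hq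
    have hval : 1 / (2 * Real.sqrt (t ^ 2 + s ^ 2)) * (2 * t)
        = t / Real.sqrt (t ^ 2 + s ^ 2) := by
      have h0 : Real.sqrt (t ^ 2 + s ^ 2) ≠ 0 := by positivity
      field_simp
    rw [hval] at hcomp
    exact ((gfun_hasDerivAt hf hsupp (Real.sqrt (t ^ 2 + s ^ 2))).comp t hcomp :)

end Main2

noncomputable def Hfun (f : EuclideanSpace ℝ (Fin 2) → ℝ) (x : EuclideanSpace ℝ (Fin 2)) :
    ℝ × ℝ → ℝ := fun p =>
  if 0 < p.1 then g1fun f x (Real.sqrt (p.1 ^ 2 + p.2 ^ 2)) / Real.sqrt (p.1 ^ 2 + p.2 ^ 2)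
  else 0

section Main3

variable {f : EuclideanSpace ℝ (Fin 2) → ℝ} {x : EuclideanSpace ℝ (Fin 2)}
variable (hf : ContDiff ℝ (⊤ : ℕ∞) f) (hsupp : HasCompactSupport f)

noncomputable def Tfun (f : EuclideanSpace ℝ (Fin 2) → ℝ) (x : EuclideanSpace ℝ (Fin 2)) :
    ℝ × ℝ → ℝ := fun p => if 0 < Real.cos p.2 then g1fun f x p.1 else 0

lemma polar_integrand_eq (p : ℝ × ℝ) (hp : p ∈ polarCoord.target) :
    p.1 • Hfun f x (polarCoord.symm p) = Tfun f x p := by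
  obtain ⟨hp1, hp2⟩ := hp
  rw [Set.mem_Ioi] at hp1
  have hsymm : polarCoord.symm p = (p.1 * Real.cos p.2, p.1 * Real.sin p.2) := rfl
  have hsq : Real.sqrt ((p.1 * Real.cos p.2) ^ 2 + (p.1 * Real.sin p.2) ^ 2) = p.1 := by
    rw [show (p.1 * Real.cos p.2) ^ 2 + (p.1 * Real.sin p.2) ^ 2 = p.1 ^ 2 by
      nlinarith [Real.sin_sq_add_cos_sq p.2]]
    exact Real.sqrt_sq hp1.le
  unfold Hfun Tfun
  rw [hsymm]
  simp only
  rw [hsq]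
  by_cases hcos : 0 < Real.cos p.2
  · rw [if_pos (by positivity), if_pos hcos, smul_eq_mul, mul_div_cancel₀ _ hp1.ne']
  · rw [if_neg, if_neg hcos, smul_eq_mul, mul_zero]
    intro h
    nlinarith [not_lt.1 hcos]

include hf hsupp in
lemma measurable_Tfun : AEStronglyMeasurable (Tfun f x)
    (volume.restrict polarCoord.target) := by
  apply Measurable.aestronglyMeasurable
  apply Measurable.ite
  · exact measurableSet_lt measurable_const (Real.continuous_cos.measurable.comp measurable_snd)
  · exact (continuous_g1fun hf hsupp).measurable.comp measurable_fst
  · exact measurable_const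

include hf hsupp in
lemma integrableOn_Tfun : IntegrableOn (Tfun f x) polarCoord.target := by
  obtain ⟨C, hC0, hC⟩ := exists_bound_g1fun (x := x) hf hsupp
  obtain ⟨R, hR0, hR⟩ := exists_radius (x := x) hsupp
  apply Integrable.mono' (g := fun p : ℝ × ℝ =>
    Set.indicator (Set.Ioc (0:ℝ) R ×ˢ Set.Ioo (-π) π) (fun _ => C) p)
  · rw [integrable_indicator_iff (measurableSet_Ioc.prod measurableSet_Ioo)]
    apply integrableOn_const (lt_top_iff_ne_top.1 ?_)
    calc (volume.restrict polarCoord.target) (Set.Ioc (0:ℝ) R ×ˢ Set.Ioo (-π) π)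
        ≤ volume (Set.Ioc (0:ℝ) R ×ˢ Set.Ioo (-π) π) := Measure.restrict_apply_le _ _
      _ < ⊤ := by
          rw [MeasureTheory.Measure.volume_eq_prod, Measure.prod_prod, Real.volume_Ioc, Real.volume_Ioo]
          exact ENNReal.mul_lt_top ENNReal.ofReal_lt_top ENNReal.ofReal_lt_top
  · exact measurable_Tfun hf hsupp
  · filter_upwards [self_mem_ae_restrict polarCoord.open_target.measurableSet] with p hp
    obtain ⟨hp1, hp2⟩ := hp
    rw [Set.mem_Ioi] at hp1
    unfold Tfun
    by_cases hpR : p.1 ≤ R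
    · rw [Set.indicator_of_mem (by exact ⟨⟨hp1, hpR⟩, hp2⟩)]
      by_cases hcos : 0 < Real.cos p.2
      · rw [if_pos hcos]; exact hC _
      · rw [if_neg hcos]; simpa using hC0
    · push_neg at hpR
      have : g1fun f x p.1 = 0 := g1fun_eq_zero hR hpR.le
      rw [this]
      simp only [ite_self, norm_zero]
      exact Set.indicator_apply_nonneg (fun _ => hC0)

include hf hsupp in
lemma integrable_Hfun : Integrable (Hfun f x) := by
  set B : ℝ × ℝ → ℝ × ℝ →L[ℝ] ℝ × ℝ := fun p =>
    LinearMap.toContinuousLinearMap (Matrix.toLin (Module.Basis.finTwoProd ℝ) (Module.Basis.finTwoProd ℝ)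
      !![Real.cos p.2, -p.1 * Real.sin p.2; Real.sin p.2, p.1 * Real.cos p.2]) with hB
  have A : ∀ p ∈ polarCoord.target, HasFDerivWithinAt polarCoord.symm (B p) polarCoord.target p :=
    fun p _ => (hasFDerivAt_polarCoord_symm p).hasFDerivWithinAt
  have B_det : ∀ p, (B p).det = p.1 := by
    intro p
    conv_rhs => rw [← one_mul p.1, ← Real.cos_sq_add_sin_sq p.2]
    simp only [hB, neg_mul, LinearMap.det_toContinuousLinearMap, LinearMap.det_toLin,
      Matrix.det_fin_two_of, sub_neg_eq_add]
    ring
  have inj : Set.InjOn polarCoord.symm polarCoord.target := polarCoord.symm.injOn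
  have key := integrableOn_image_iff_integrableOn_abs_det_fderiv_smul volume
    polarCoord.open_target.measurableSet A inj (Hfun f x)
  rw [polarCoord.symm_image_target_eq_source] at key
  have hRHS : IntegrableOn (fun p => |(B p).det| • Hfun f x (polarCoord.symm p))
      polarCoord.target := by
    have hEq : Set.EqOn (Tfun f x)
        (fun p => |(B p).det| • Hfun f x (polarCoord.symm p)) polarCoord.target := by
      intro p hp
      simp only
      rw [B_det, abs_of_pos (Set.mem_Ioi.1 hp.1), polar_integrand_eq p hp]
    exact (integrableOn_Tfun hf hsupp).congr_fun hEq polarCoord.open_target.measurableSet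
  have hsrc : IntegrableOn (Hfun f x) polarCoord.source := key.2 hRHS
  rw [IntegrableOn, Measure.restrict_congr_set polarCoord_source_ae_eq_univ,
    Measure.restrict_univ] at hsrc
  exact hsrc

lemma inner_cos (c : ℝ) :
    ∫ θ in Set.Ioo (-π) π, (if 0 < Real.cos θ then c else 0) = π * c := by
  have h1 : ∀ θ : ℝ, (if 0 < Real.cos θ then c else 0)
      = Set.indicator {θ : ℝ | 0 < Real.cos θ} (fun _ => c) θ := by
    intro θ
    rw [Set.indicator_apply]
    rfl
  simp_rw [h1]
  rw [setIntegral_indicator (measurableSet_lt measurable_const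
    Real.continuous_cos.measurable)]
  have h2 : Set.Ioo (-π) π ∩ {θ : ℝ | 0 < Real.cos θ} = Set.Ioo (-(π/2)) (π/2) := by
    ext θ
    simp only [Set.mem_inter_iff, Set.mem_Ioo, Set.mem_setOf_eq]
    constructor
    · rintro ⟨⟨ha, hb⟩, hc⟩
      constructor
      · by_contra h
        push_neg at h
        have : Real.cos (-θ) ≤ 0 :=
          Real.cos_nonpos_of_pi_div_two_le_of_le (by linarith) (by linarith)
        rw [Real.cos_neg] at this
        linarith
      · by_contra h
        push_neg at h
        have : Real.cos θ ≤ 0 :=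
          Real.cos_nonpos_of_pi_div_two_le_of_le (by linarith) (by linarith)
        linarith
    · rintro ⟨ha, hb⟩
      have hpi := Real.pi_pos
      exact ⟨⟨by linarith, by linarith⟩, Real.cos_pos_of_mem_Ioo ⟨ha, hb⟩⟩
  rw [h2, setIntegral_const, Real.volume_real_Ioo_of_le (by linarith [Real.pi_pos])]
  rw [smul_eq_mul]
  ring

include hf hsupp in
lemma integral_Hfun_polar : ∫ p, Hfun f x p = π * ∫ r in Set.Ioi (0:ℝ), g1fun f x r := by
  rw [← integral_comp_polarCoord_symm]
  rw [setIntegral_congr_fun polarCoord.open_target.measurableSet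
    (fun p hp => polar_integrand_eq p hp)]
  have htarget : polarCoord.target = Set.Ioi (0:ℝ) ×ˢ Set.Ioo (-π) π := rfl
  have hTint : Integrable (Tfun f x)
      ((volume.restrict (Set.Ioi (0:ℝ))).prod (volume.restrict (Set.Ioo (-π) π))) := by
    have h := integrableOn_Tfun (x := x) hf hsupp
    rw [IntegrableOn, htarget, Measure.volume_eq_prod, ← Measure.prod_restrict] at h
    exact h
  rw [htarget, Measure.volume_eq_prod, ← Measure.prod_restrict]
  rw [integral_prod _ hTint]
  have hinner : ∀ r : ℝ, (∫ θ in Set.Ioo (-π) π, Tfun f x (r, θ)) = π * g1fun f x r := by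
    intro r
    exact inner_cos (g1fun f x r)
  simp_rw [hinner]
  rw [integral_const_mul]

include hf hsupp in
lemma integral_Hfun_fubini :
    ∫ p, Hfun f x p = ∫ t in Set.Ioi (0:ℝ),
      ∫ s : ℝ, g1fun f x (Real.sqrt (t ^ 2 + s ^ 2)) / Real.sqrt (t ^ 2 + s ^ 2) := by
  have hint := integrable_Hfun (x := x) hf hsupp
  rw [Measure.volume_eq_prod] at hint
  rw [show (volume : Measure (ℝ × ℝ)) = (volume : Measure ℝ).prod volume from
    Measure.volume_eq_prod ℝ ℝ]
  rw [integral_prod _ hint]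
  rw [← integral_indicator measurableSet_Ioi]
  congr 1
  funext t
  by_cases ht : t ∈ Set.Ioi (0:ℝ)
  · rw [Set.indicator_of_mem ht]
    congr 1
    funext s
    unfold Hfun
    rw [if_pos (Set.mem_Ioi.1 ht)]
  · rw [Set.indicator_of_notMem ht]
    have hz : ∀ s : ℝ, Hfun f x (t, s) = 0 := fun s => if_neg (by simpa using ht)
    simp_rw [hz]
    exact integral_zero _ _

include hf hsupp in
lemma integrable_slice_int : IntegrableOn
    (fun t => ∫ s : ℝ, g1fun f x (Real.sqrt (t ^ 2 + s ^ 2)) / Real.sqrt (t ^ 2 + s ^ 2))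
    (Set.Ioi (0:ℝ)) := by
  have hint := integrable_Hfun (x := x) hf hsupp
  rw [Measure.volume_eq_prod] at hint
  have h2 := hint.integral_prod_left
  apply (h2.integrableOn).congr_fun ?_ measurableSet_Ioi
  intro t ht
  simp only
  congr 1
  funext s
  unfold Hfun
  rw [if_pos (Set.mem_Ioi.1 ht)]

include hf hsupp in
lemma integral_g1_Ioi : ∫ r in Set.Ioi (0:ℝ), g1fun f x r = - f x := by
  obtain ⟨R, hR0, hR⟩ := exists_radius (x := x) hsupp
  have hind : Set.indicator (Set.Ioi (0:ℝ)) (g1fun f x)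
      = Set.indicator (Set.Ioc (0:ℝ) R) (g1fun f x) := by
    funext r
    by_cases h1 : r ∈ Set.Ioc (0:ℝ) R
    · rw [Set.indicator_of_mem h1, Set.indicator_of_mem (Set.mem_Ioi.2 h1.1)]
    · by_cases h2 : r ∈ Set.Ioi (0:ℝ)
      · have hrR : R < r := by
          rw [Set.mem_Ioc, not_and] at h1
          exact not_le.1 (h1 (Set.mem_Ioi.1 h2))
        rw [Set.indicator_of_mem h2, Set.indicator_of_notMem h1,
          g1fun_eq_zero hR hrR.le]
      · rw [Set.indicator_of_notMem h2, Set.indicator_of_notMem h1]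
  rw [← integral_indicator measurableSet_Ioi, hind, integral_indicator measurableSet_Ioc]
  rw [← intervalIntegral.integral_of_le hR0.le]
  rw [intervalIntegral.integral_eq_sub_of_hasDerivAt
    (fun r _ => gfun_hasDerivAt hf hsupp r)
    ((continuous_g1fun hf hsupp).intervalIntegrable 0 R)]
  rw [gfun_eq_zero hR le_rfl, gfun_zero]
  ring

end Main3


/-- **Radon's inversion formula on the Euclidean plane.** For a smooth compactly supported
`f : ℝ² → ℝ` and any `x`, the mean value function `F_x` is differentiable on `(0, ∞)`,
`F_x'(t)/t` is integrable on `(0, ∞)`, and `f(x) = -(1/π) ∫₀^∞ F_x'(t)/t dt`. -/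
theorem radon_inversion_formula
    (f : EuclideanSpace ℝ (Fin 2) → ℝ)
    (hf : ContDiff ℝ (⊤ : ℕ∞) f) (hsupp : HasCompactSupport f)
    (x : EuclideanSpace ℝ (Fin 2)) :
    (∀ t ∈ Set.Ioi (0:ℝ), DifferentiableAt ℝ (meanValue f x) t) ∧
    IntegrableOn (fun t => deriv (meanValue f x) t / t) (Set.Ioi (0:ℝ)) ∧
    f x = -(1 / π) * ∫ t in Set.Ioi (0:ℝ), deriv (meanValue f x) t / t := by
  have hev : ∀ t : ℝ, 0 < t → meanValue f x =ᶠ[nhds t]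
      (fun t => ∫ s : ℝ, gfun f x (Real.sqrt (t ^ 2 + s ^ 2))) := by
    intro t ht
    filter_upwards [Ioi_mem_nhds ht] with u hu
    exact meanValue_eq hf hsupp (ne_of_gt (Set.mem_Ioi.1 hu))
  have hderiv : ∀ t : ℝ, 0 < t → HasDerivAt (meanValue f x)
      (∫ s : ℝ, g1fun f x (Real.sqrt (t ^ 2 + s ^ 2)) * (t / Real.sqrt (t ^ 2 + s ^ 2))) t :=
    fun t ht => (F_hasDerivAt hf hsupp ht).congr_of_eventuallyEq (hev t ht)
  have hdd : ∀ t ∈ Set.Ioi (0:ℝ), deriv (meanValue f x) t / t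
      = ∫ s : ℝ, g1fun f x (Real.sqrt (t ^ 2 + s ^ 2)) / Real.sqrt (t ^ 2 + s ^ 2) := by
    intro t ht
    rw [Set.mem_Ioi] at ht
    rw [(hderiv t ht).deriv]
    rw [show (∫ s : ℝ, g1fun f x (Real.sqrt (t ^ 2 + s ^ 2)) * (t / Real.sqrt (t ^ 2 + s ^ 2)))
        = t * ∫ s : ℝ, g1fun f x (Real.sqrt (t ^ 2 + s ^ 2)) / Real.sqrt (t ^ 2 + s ^ 2) by
      rw [← integral_const_mul]
      congr 1
      funext s
      ring]
    rw [mul_div_cancel_left₀ _ (ne_of_gt ht)]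
  refine ⟨fun t ht => (hderiv t (Set.mem_Ioi.1 ht)).differentiableAt, ?_, ?_⟩
  · have hEq : Set.EqOn
        (fun t => ∫ s : ℝ, g1fun f x (Real.sqrt (t ^ 2 + s ^ 2)) / Real.sqrt (t ^ 2 + s ^ 2))
        (fun t => deriv (meanValue f x) t / t) (Set.Ioi (0:ℝ)) :=
      fun t ht => (hdd t ht).symm
    exact (integrable_slice_int hf hsupp).congr_fun hEq measurableSet_Ioi
  · rw [setIntegral_congr_fun measurableSet_Ioi hdd]
    rw [← integral_Hfun_fubini hf hsupp, integral_Hfun_polar hf hsupp,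
      integral_g1_Ioi hf hsupp]
    have hpi := Real.pi_ne_zero
    field_simp
end

section
/- Reduction principle for support theorems: Let X be a metric space with escape function P : ℝ≥0 → ℝ≥0, let r₀ ≥ 0 and μ, σ : [r₀,∞) → ℝ≥0 with P(σ(r)) ≤ μ(r) for all r ≥ r₀. Fix p ∈ X, r ≥ r₀, and let f : X → ℝ be continuous with compact support such that t ↦ f(γ(t)) is integrable for every local geodesic line γ of X and ∫_ℝ f(γ(t)) dt = 0 for every local geodesic line γ of X satisfying d(γ(t), p) > σ(r) for all t ∈ ℝ. Assume that for every x ∈ X there exist a metric space Y, a continuous map φ : Y → X, and points q, y ∈ Y with φ(q) = p and φ(y) = x such that: (a) for every local geodesic line σ' of Y, φ∘σ' is a local geodesic line of X; (b) d_X(x, p) ≤ d_Y(y, q); (c) d_Y(y', q) ≤ P(d_X(φ(y'), p)) for all y' ∈ Y; (d) f∘φ has compact support in Y; (e) Y satisfies the μ-support theorem at q: for every continuous compactly supported g : Y → ℝ (integrable along all local geodesic lines of Y) and every r' ∈ [r₀,∞), if ∫_ℝ g(σ'(t)) dt = 0 for every local geodesic line σ' of Y with d(σ'(t), q) > μ(r')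 for all t, then g vanishes outside the closed ball of radius r' around q. Then f(x) = 0 for every x ∈ X with d(x, p) > r. -/
/-!
Fix `x` with `d(x, p) > r` and a space `Y → X` through `x` as in the hypothesis; it suffices
to check that `f ∘ φ` satisfies the hypothesis of the `μ`-support theorem at radius `r`. Let
`β` be a local geodesic line of `Y` staying outside the ball of radius `μ r` around `q`, and
`γ = φ ∘ β`. The distance from `γ` to `p` is never `σ r`, since otherwise (c) would put `β`
within `P (σ r) ≤ μ r` of `q`. By continuity it therefore stays on one side of `σ r`, and the
escape function forbids the inner side. So `γ` avoids the ball of radius `σ r` and the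
X-ray transform of `f` vanishes along it.
-/

open MeasureTheory

/-- A (unit-speed) local geodesic line in a metric space: around every parameter `t`
there is `ε > 0` such that the map is an isometric embedding of `[t - ε, t + ε]`. -/
def IsLocalGeodesicLine {X : Type*} [MetricSpace X] (γ : ℝ → X) : Prop :=
  ∀ t : ℝ, ∃ ε > (0:ℝ), ∀ s ∈ Set.Icc (t - ε) (t + ε), ∀ s' ∈ Set.Icc (t - ε) (t + ε),
    dist (γ s) (γ s') = |s - s'|

lemma IsLocalGeodesicLine.continuous {X : Type*} [MetricSpace X] {γ : ℝ → X}
    (h : IsLocalGeodesicLine γ) : Continuous γ := by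
  rw [Metric.continuous_iff]
  intro t δ hδ
  obtain ⟨ε, hε, hiso⟩ := h t
  refine ⟨min ε δ, lt_min hε hδ, fun s hs => ?_⟩
  rw [Real.dist_eq] at hs
  have hsε := abs_lt.1 (hs.trans_le (min_le_left _ _))
  rw [hiso s ⟨by linarith, by linarith⟩ t ⟨by linarith, by linarith⟩]
  exact hs.trans_le (min_le_right _ _)

def IsEscapeFunction (X : Type*) [MetricSpace X] (P : ℝ → ℝ) : Prop :=
  ∀ γ : ℝ → X, IsLocalGeodesicLine γ → ∀ r : ℝ, 0 ≤ r → ∀ t : ℝ, P r < t →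
    r < dist (γ 0) (γ t)

lemma IsEscapeFunction.exists_lt_dist {X : Type*} [MetricSpace X] {P : ℝ → ℝ}
    (hP : IsEscapeFunction X P) {γ : ℝ → X} (hγ : IsLocalGeodesicLine γ) (R : ℝ) (p : X) :
    ∃ t, R < dist (γ t) p := by
  by_contra! hball
  have hR : 0 ≤ R := dist_nonneg.trans (hball 0)
  have hfar := hP γ hγ (2 * R) (by positivity) (P (2 * R) + 1) (by linarith)
  have hnear : dist (γ 0) (γ (P (2 * R) + 1)) ≤ 2 * R :=
    calc dist (γ 0) (γ (P (2 * R) + 1)) ≤ dist (γ 0) p + dist (γ (P (2 * R) + 1)) p :=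
          dist_triangle_right _ _ _
      _ ≤ R + R := add_le_add (hball _) (hball _)
      _ = 2 * R := by ring
  linarith

lemma forall_lt_of_continuous_of_forall_ne {g : ℝ → ℝ} (hg : Continuous g) {c : ℝ}
    (hne : ∀ t, g t ≠ c) {t₁ : ℝ} (ht₁ : c < g t₁) (t : ℝ) : c < g t := by
  by_contra! ht
  obtain ⟨s, hs⟩ := intermediate_value_univ t t₁ hg ⟨ht, ht₁.le⟩
  exact hne s hs

lemma IsEscapeFunction.forall_lt_dist_of_bound {X Y : Type*} [MetricSpace X] [MetricSpace Y]
    {P : ℝ → ℝ} (hP : IsEscapeFunction X P) {γ : ℝ → X} (hγ : IsLocalGeodesicLine γ)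
    {β : ℝ → Y} {p : X} {q : Y} (hβγ : ∀ t, dist (β t) q ≤ P (dist (γ t) p))
    {s m : ℝ} (hsm : P s ≤ m) (hβ : ∀ t, m < dist (β t) q) (t : ℝ) :
    s < dist (γ t) p := by
  have hne : ∀ t, dist (γ t) p ≠ s := fun t hts => by
    have := hβγ t
    rw [hts] at this
    linarith [hβ t]
  obtain ⟨t₁, ht₁⟩ := hP.exists_lt_dist hγ s p
  exact forall_lt_of_continuous_of_forall_ne (hγ.continuous.dist continuous_const) hne ht₁ t

universe u v

theorem xray_support_reduction_principle_general
    {X : Type u} [MetricSpace X]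
    (P : ℝ → ℝ)
    (hP : ∀ γ : ℝ → X, IsLocalGeodesicLine γ → ∀ r : ℝ, 0 ≤ r → ∀ t : ℝ, P r < t →
      r < dist (γ 0) (γ t))
    (r₀ : ℝ)
    (μ σ : ℝ → ℝ)
    (hPσμ : ∀ r, r₀ ≤ r → P (σ r) ≤ μ r)
    (p : X) (r : ℝ) (hr : r₀ ≤ r)
    (f : X → ℝ) (hf : Continuous f)
    (hint : ∀ γ : ℝ → X, IsLocalGeodesicLine γ → Integrable (fun t => f (γ t)))
    (hzero : ∀ γ : ℝ → X, IsLocalGeodesicLine γ → (∀ t : ℝ, σ r < dist (γ t) p) →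
      ∫ t : ℝ, f (γ t) = 0)
    (hred : ∀ x : X, ∃ (Y : Type v) (_ : MetricSpace Y) (φ : Y → X) (q y : Y),
      Continuous φ ∧ φ q = p ∧ φ y = x ∧
      (∀ σ' : ℝ → Y, IsLocalGeodesicLine σ' → IsLocalGeodesicLine (φ ∘ σ')) ∧
      dist x p ≤ dist y q ∧
      (∀ y' : Y, dist y' q ≤ P (dist (φ y') p)) ∧
      HasCompactSupport (f ∘ φ) ∧
      (∀ g : Y → ℝ, Continuous g → HasCompactSupport g →
        (∀ σ' : ℝ → Y, IsLocalGeodesicLine σ' → Integrable (fun t => g (σ' t))) →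
        ∀ r' : ℝ, r₀ ≤ r' →
        (∀ σ' : ℝ → Y, IsLocalGeodesicLine σ' → (∀ t : ℝ, μ r' < dist (σ' t) q) →
          ∫ t : ℝ, g (σ' t) = 0) →
        ∀ y' : Y, r' < dist y' q → g y' = 0)) :
    ∀ x : X, r < dist x p → f x = 0 := by
  intro x hx
  obtain ⟨Y, _, φ, q, y, hφ, -, rfl, hgeo, hxy, hbound, hcs, hsupport⟩ := hred x
  refine hsupport (f ∘ φ) (hf.comp hφ) hcs (fun β hβ => hint _ (hgeo β hβ)) r hr
    (fun β hβ hfar => hzero _ (hgeo β hβ) ?_) y (hx.trans_le hxy)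
  exact IsEscapeFunction.forall_lt_dist_of_bound hP (hgeo β hβ) (fun t => hbound (β t))
    (hPσμ r hr) hfar

/-- **Reduction principle for support theorems.** Let `X` be a metric space with escape
function `P`, let `μ, σ : [r₀, ∞) → ℝ≥0` with `P (σ r) ≤ μ r`. If the X-ray transform of a
continuous compactly supported `f : X → ℝ` vanishes on all local geodesic lines avoiding the
ball of radius `σ r` around `p`, and every point of `X` lies on a totally geodesic immersed
metric space `Y` through `p` satisfying the `μ`-support theorem, then `f` vanishes outside
the closed ball of radius `r` around `p`. -/
theorem xray_support_reduction_principle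
    {X : Type u} [MetricSpace X]
    (P : ℝ → ℝ)
    (hP : ∀ γ : ℝ → X, IsLocalGeodesicLine γ → ∀ r : ℝ, 0 ≤ r → ∀ t : ℝ, P r < t →
      r < dist (γ 0) (γ t))
    (r₀ : ℝ) (hr₀ : 0 ≤ r₀)
    (μ σ : ℝ → ℝ)
    (hμ : ∀ r, r₀ ≤ r → 0 ≤ μ r) (hσ : ∀ r, r₀ ≤ r → 0 ≤ σ r)
    (hPσμ : ∀ r, r₀ ≤ r → P (σ r) ≤ μ r)
    (p : X) (r : ℝ) (hr : r₀ ≤ r)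
    (f : X → ℝ) (hf : Continuous f) (hsupp : HasCompactSupport f)
    (hint : ∀ γ : ℝ → X, IsLocalGeodesicLine γ → Integrable (fun t => f (γ t)))
    (hzero : ∀ γ : ℝ → X, IsLocalGeodesicLine γ → (∀ t : ℝ, σ r < dist (γ t) p) →
      ∫ t : ℝ, f (γ t) = 0)
    (hred : ∀ x : X, ∃ (Y : Type v) (_ : MetricSpace Y) (φ : Y → X) (q y : Y),
      Continuous φ ∧ φ q = p ∧ φ y = x ∧
      (∀ σ' : ℝ → Y, IsLocalGeodesicLine σ' → IsLocalGeodesicLine (φ ∘ σ')) ∧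
      dist x p ≤ dist y q ∧
      (∀ y' : Y, dist y' q ≤ P (dist (φ y') p)) ∧
      HasCompactSupport (f ∘ φ) ∧
      (∀ g : Y → ℝ, Continuous g → HasCompactSupport g →
        (∀ σ' : ℝ → Y, IsLocalGeodesicLine σ' → Integrable (fun t => g (σ' t))) →
        ∀ r' : ℝ, r₀ ≤ r' →
        (∀ σ' : ℝ → Y, IsLocalGeodesicLine σ' → (∀ t : ℝ, μ r' < dist (σ' t) q) →
          ∫ t : ℝ, g (σ' t) = 0) →
        ∀ y' : Y, r' < dist y' q → g y' = 0)) :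
    ∀ x : X, r < dist x p → f x = 0 :=
  xray_support_reduction_principle_general P hP r₀ μ σ hPσμ p r hr f hf hint hzero hred
end

section
/- Bracket identity along nilpotent geodesics: In the 2-step nilpotent setup, for all t ∈ ℝ one has ⟨[h(t), h'(t)], z₀⟩_Z = ‖h₀‖² − ⟨h₀, e^{t j(z₀)} h₀⟩_H. -/
open MeasureTheory intervalIntegral
open scoped RealInnerProductSpace

/-!
With `A = j z₀` one has `⟪[h, k], z₀⟫ = ⟪A h, k⟫`. By the fundamental theorem of calculus
`A (∫₀^t e^{sA} h₀ ds) = e^{tA} h₀ - h₀`, and `e^{tA}` is an isometry because `A` is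
skew-adjoint, so `⟪e^{tA} h₀ - h₀, e^{tA} h₀⟫ = ‖h₀‖² - ⟪h₀, e^{tA} h₀⟫`.
-/

section Banach

variable {E : Type*} [NormedAddCommGroup E] [NormedSpace ℝ E] [CompleteSpace E]

theorem hasDerivAt_exp_smul_apply (A : E →L[ℝ] E) (x : E) (s : ℝ) :
    HasDerivAt (fun u : ℝ => NormedSpace.exp (u • A) x) (A (NormedSpace.exp (s • A) x)) s := by
  simpa using (hasDerivAt_exp_smul_const' (𝕂 := ℝ) A s).clm_apply (hasDerivAt_const s x)

theorem apply_integral_exp_smul_apply (A : E →L[ℝ] E) (x : E) (a b : ℝ) :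
    A (∫ s in a..b, NormedSpace.exp (s • A) x) =
      NormedSpace.exp (b • A) x - NormedSpace.exp (a • A) x := by
  have hcont : Continuous fun s : ℝ => NormedSpace.exp (s • A) x :=
    continuous_iff_continuousAt.2 fun s => (hasDerivAt_exp_smul_apply A x s).continuousAt
  rw [← A.intervalIntegral_comp_comm (hcont.intervalIntegrable a b)]
  exact integral_eq_sub_of_hasDerivAt (fun s _ => hasDerivAt_exp_smul_apply A x s)
    ((A.continuous.comp hcont).intervalIntegrable a b)

end Banach

section Hilbert

variable {H : Type*} [NormedAddCommGroup H] [InnerProductSpace ℝ H] [CompleteSpace H]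

theorem norm_exp_smul_apply_of_skew {A : H →L[ℝ] H} (hA : ∀ x y, ⟪A x, y⟫ = -⟪x, A y⟫)
    (t : ℝ) (x : H) : ‖NormedSpace.exp (t • A) x‖ = ‖x‖ := by
  have hskew : A ∈ skewAdjoint (H →L[ℝ] H) := by
    rw [skewAdjoint.mem_iff, ContinuousLinearMap.star_eq_adjoint, eq_comm,
      ContinuousLinearMap.eq_adjoint_iff]
    intro x y
    rw [neg_apply, inner_neg_left, hA, neg_neg]
  let +nondep : NormedAlgebra ℚ (H →L[ℝ] H) := .restrictScalars ℚ ℝ (H →L[ℝ] H)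
  have hunitary : NormedSpace.exp (t • A) ∈ unitary (H →L[ℝ] H) :=
    NormedSpace.exp_mem_unitary_of_mem_skewAdjoint (skewAdjoint.smul_mem t hskew)
  exact ContinuousLinearMap.norm_map_of_mem_unitary hunitary x

end Hilbert

theorem nilpotent_geodesic_bracket_identity_general
    {H Z : Type*}
    [NormedAddCommGroup H] [InnerProductSpace ℝ H] [FiniteDimensional ℝ H]
    [NormedAddCommGroup Z] [InnerProductSpace ℝ Z]
    (j : Z →ₗ[ℝ] H →L[ℝ] H)
    (hskew : ∀ (z : Z) (x y : H), ⟪j z x, y⟫ = -⟪x, j z y⟫)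
    (bracket : H →ₗ[ℝ] H →ₗ[ℝ] Z)
    (hbracket : ∀ (h k : H) (z : Z), ⟪bracket h k, z⟫ = ⟪j z h, k⟫)
    (z₀ : Z) (h₀ : H) (t : ℝ) :
    ⟪bracket (∫ s in (0:ℝ)..t, NormedSpace.exp (s • j z₀) h₀)
        (NormedSpace.exp (t • j z₀) h₀), z₀⟫
      = ‖h₀‖ ^ 2 - ⟪h₀, NormedSpace.exp (t • j z₀) h₀⟫ := by
  rw [hbracket, apply_integral_exp_smul_apply, zero_smul, NormedSpace.exp_zero,
    one_apply_eq_self, inner_sub_left, real_inner_self_eq_norm_sq,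
    norm_exp_smul_apply_of_skew (hskew z₀)]

/-- **Bracket identity along nilpotent geodesics.** In the 2-step nilpotent setup, with
`h(t) = ∫₀^t e^{s j(z₀)} h₀ ds` and `h'(t) = e^{t j(z₀)} h₀`, one has
`⟨[h(t), h'(t)], z₀⟩ = ‖h₀‖² − ⟨h₀, e^{t j(z₀)} h₀⟩`. -/
theorem nilpotent_geodesic_bracket_identity
    {H Z : Type*}
    [NormedAddCommGroup H] [InnerProductSpace ℝ H] [FiniteDimensional ℝ H]
    [NormedAddCommGroup Z] [InnerProductSpace ℝ Z] [FiniteDimensional ℝ Z]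
    (j : Z →ₗ[ℝ] H →L[ℝ] H)
    (hskew : ∀ (z : Z) (x y : H), ⟪j z x, y⟫ = -⟪x, j z y⟫)
    (bracket : H →ₗ[ℝ] H →ₗ[ℝ] Z)
    (hbracket : ∀ (h k : H) (z : Z), ⟪bracket h k, z⟫ = ⟪j z h, k⟫)
    (z₀ : Z) (h₀ : H) (t : ℝ) :
    ⟪bracket (∫ s in (0:ℝ)..t, NormedSpace.exp (s • j z₀) h₀)
        (NormedSpace.exp (t • j z₀) h₀), z₀⟫
      = ‖h₀‖ ^ 2 - ⟪h₀, NormedSpace.exp (t • j z₀) h₀⟫ :=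
  nilpotent_geodesic_bracket_identity_general j hskew bracket hbracket z₀ h₀ t
end

section
/- Linear growth of the central component: In the 2-step nilpotent setup, for every t ≥ 0 one has ⟨z(t), z₀⟩_Z ≥ t‖z₀‖², and consequently ‖z(t)‖ ≥ t‖z₀‖. -/
/-!
Since `j z₀` is skew-adjoint, `e^{s j(z₀)}` is orthogonal, and integrating the derivative of
`s ↦ e^{s j(z₀)} h₀` gives `j(z₀) h(s) = h'(s) - h₀`. Hence
`⟨[h(s), h'(s)], z₀⟩ = ⟨h'(s) - h₀, h'(s)⟩ = ‖h₀‖² - ⟨h₀, h'(s)⟩ ≥ 0` by Cauchy–Schwarz, and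
integrating over `[0, t]` gives `⟨z(t), z₀⟩ ≥ t ‖z₀‖²`; Cauchy–Schwarz once more bounds `‖z(t)‖`.
-/

open MeasureTheory intervalIntegral
open scoped RealInnerProductSpace

namespace ContinuousLinearMap

section Normed

variable {E : Type*} [NormedAddCommGroup E] [NormedSpace ℝ E] [CompleteSpace E]
  (A : E →L[ℝ] E) (v : E)

theorem hasDerivAt_exp_smul_apply (s : ℝ) :
    HasDerivAt (fun u : ℝ => NormedSpace.exp (u • A) v) (A (NormedSpace.exp (s • A) v)) s := by
  simpa using (hasDerivAt_exp_smul_const' A s).clm_apply (hasDerivAt_const s v)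

theorem continuous_exp_smul_apply : Continuous fun s : ℝ => NormedSpace.exp (s • A) v :=
  continuous_iff_continuousAt.2 fun s => (hasDerivAt_exp_smul_apply A v s).continuousAt

theorem apply_integral_exp_smul_apply (s : ℝ) :
    A (∫ u in (0:ℝ)..s, NormedSpace.exp (u • A) v) = NormedSpace.exp (s • A) v - v := by
  have hg := continuous_exp_smul_apply A v
  rw [← A.intervalIntegral_comp_comm (hg.intervalIntegrable (μ := volume) 0 s),
    integral_eq_sub_of_hasDerivAt (fun u _ => hasDerivAt_exp_smul_apply A v u)
    ((A.continuous.comp hg).intervalIntegrable 0 s)]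
  simp

end Normed

section InnerProduct

variable {E : Type*} [NormedAddCommGroup E] [InnerProductSpace ℝ E] [CompleteSpace E]
  {A : E →L[ℝ] E}

theorem mem_skewAdjoint_iff_inner :
    A ∈ skewAdjoint (E →L[ℝ] E) ↔ ∀ x y, ⟪A x, y⟫ = -⟪x, A y⟫ := by
  rw [skewAdjoint.mem_iff, star_eq_adjoint, eq_comm, eq_adjoint_iff]
  refine forall₂_congr fun x y => ?_
  rw [_root_.neg_apply, inner_neg_left, neg_eq_iff_eq_neg]

theorem norm_exp_smul_apply (hA : A ∈ skewAdjoint (E →L[ℝ] E)) (s : ℝ) (v : E) :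
    ‖NormedSpace.exp (s • A) v‖ = ‖v‖ := by
  let : NormedAlgebra ℚ (E →L[ℝ] E) := .restrictScalars ℚ ℝ _
  have hu := NormedSpace.exp_mem_unitary_of_mem_skewAdjoint (skewAdjoint.smul_mem s hA)
  exact norm_map_of_mem_unitary hu v

theorem inner_apply_integral_exp_smul_apply_nonneg (hA : A ∈ skewAdjoint (E →L[ℝ] E))
    (v : E) (s : ℝ) :
    0 ≤ ⟪A (∫ u in (0:ℝ)..s, NormedSpace.exp (u • A) v), NormedSpace.exp (s • A) v⟫ := by
  rw [apply_integral_exp_smul_apply, inner_sub_left, real_inner_self_eq_norm_sq,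
    norm_exp_smul_apply hA, sub_nonneg, sq]
  calc ⟪v, NormedSpace.exp (s • A) v⟫ ≤ ‖v‖ * ‖NormedSpace.exp (s • A) v‖ :=
        real_inner_le_norm _ _
    _ = ‖v‖ * ‖v‖ := by rw [norm_exp_smul_apply hA]

end InnerProduct

end ContinuousLinearMap

section InnerProduct

variable {F : Type*} [NormedAddCommGroup F] [InnerProductSpace ℝ F]

theorem inner_intervalIntegral_nonneg [CompleteSpace F] {f : ℝ → F} {a b : ℝ} {w : F}
    (hab : a ≤ b) (hf : IntervalIntegrable f volume a b)
    (hpos : ∀ s ∈ Set.Icc a b, 0 ≤ ⟪f s, w⟫) : 0 ≤ ⟪∫ s in a..b, f s, w⟫ := by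
  rw [real_inner_comm, ← innerSL_apply_apply ℝ, ← (innerSL ℝ w).intervalIntegral_comp_comm hf]
  exact integral_nonneg hab fun s hs => by simpa [real_inner_comm] using hpos s hs

theorem mul_norm_le_norm_of_mul_norm_sq_le_inner {x y : F} {c : ℝ}
    (h : c * ‖y‖ ^ 2 ≤ ⟪x, y⟫) : c * ‖y‖ ≤ ‖x‖ := by
  rcases (norm_nonneg y).eq_or_lt with hy | hy
  · simp [← hy]
  · refine le_of_mul_le_mul_right ?_ hy
    calc c * ‖y‖ * ‖y‖ = c * ‖y‖ ^ 2 := by ring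
      _ ≤ ⟪x, y⟫ := h
      _ ≤ ‖x‖ * ‖y‖ := real_inner_le_norm x y

end InnerProduct

/-- **Linear growth of the central component.** In the 2-step nilpotent setup, with
`h(t) = ∫₀^t e^{s j(z₀)} h₀ ds` and `z(t) = t z₀ + ½ ∫₀^t [h(s), h'(s)] ds`,
for every `t ≥ 0` one has `⟨z(t), z₀⟩ ≥ t ‖z₀‖²`, and consequently `‖z(t)‖ ≥ t ‖z₀‖`. -/
theorem nilpotent_geodesic_central_growth
    {H Z : Type*}
    [NormedAddCommGroup H] [InnerProductSpace ℝ H] [FiniteDimensional ℝ H]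
    [NormedAddCommGroup Z] [InnerProductSpace ℝ Z] [FiniteDimensional ℝ Z]
    (j : Z →ₗ[ℝ] H →L[ℝ] H)
    (hskew : ∀ (z : Z) (x y : H), ⟪j z x, y⟫ = -⟪x, j z y⟫)
    (bracket : H →ₗ[ℝ] H →ₗ[ℝ] Z)
    (hbracket : ∀ (h k : H) (z : Z), ⟪bracket h k, z⟫ = ⟪j z h, k⟫)
    (z₀ : Z) (h₀ : H) (t : ℝ) (ht : 0 ≤ t) :
    t * ‖z₀‖ ^ 2 ≤
        ⟪t • z₀ + (1 / 2 : ℝ) •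
          ∫ s in (0:ℝ)..t,
            bracket (∫ u in (0:ℝ)..s, NormedSpace.exp (u • j z₀) h₀)
              (NormedSpace.exp (s • j z₀) h₀), z₀⟫ ∧
      t * ‖z₀‖ ≤
        ‖t • z₀ + (1 / 2 : ℝ) •
          ∫ s in (0:ℝ)..t,
            bracket (∫ u in (0:ℝ)..s, NormedSpace.exp (u • j z₀) h₀)
              (NormedSpace.exp (s • j z₀) h₀)‖ := by
  set A := j z₀
  set F : ℝ → Z := fun s =>
    bracket (∫ u in (0:ℝ)..s, NormedSpace.exp (u • A) h₀) (NormedSpace.exp (s • A) h₀)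
  have hA : A ∈ skewAdjoint (H →L[ℝ] H) :=
    ContinuousLinearMap.mem_skewAdjoint_iff_inner.2 (hskew z₀)
  have hF : Continuous F := by
    have hg := A.continuous_exp_smul_apply h₀
    exact (bracket.toContinuousBilinearMap.continuous.comp
      (continuous_primitive (fun a b => hg.intervalIntegrable a b) 0)).clm_apply hg
  have hcentral : 0 ≤ ⟪∫ s in (0:ℝ)..t, F s, z₀⟫ :=
    inner_intervalIntegral_nonneg ht (hF.intervalIntegrable 0 t) fun s _ => by
      rw [hbracket]
      exact A.inner_apply_integral_exp_smul_apply_nonneg hA h₀ s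
  have hinner : t * ‖z₀‖ ^ 2 ≤ ⟪t • z₀ + (1 / 2 : ℝ) • ∫ s in (0:ℝ)..t, F s, z₀⟫ := by
    rw [inner_add_left, real_inner_smul_left, real_inner_smul_left, real_inner_self_eq_norm_sq]
    linarith
  exact ⟨hinner, mul_norm_le_norm_of_mul_norm_sq_le_inner hinner⟩
end
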